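/- Let σ : ℝ → ℝ be a polynomial of degree d. Then every function of the form x ↦ W₂(σ∘W₁(x)), where W₁ : ℝ → ℝᵐ and W₂ : ℝᵐ → ℝ are affine maps and σ is applied componentwise, is a polynomial of degree at most d. Consequently, single-hidden-layer networks with polynomial activation σ cannot uniformly approximate the function x ↦ |x| on [−1,1] to arbitrary accuracy. -/

import Mathlib

/-!
A network with activation `P` is `c₀ + ∑ cⱼ P(aⱼ x + bⱼ)`, and composing `P` with an affine map
does not raise its degree, so the network is a polynomial of degree at most `deg P`. Polynomials of
degree `≤ d` restricted to a compact set form a finite-dimensional, hence closed, subspace of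
`C(s, ℝ)`, so a uniform limit of them on `[-1, 1]` is again a polynomial there. But `|x|` is not:
such a polynomial would agree with `X` on `[0, 1]` and with `-X` on `[-1, 0]`.
-/

open Polynomial

namespace Polynomial

theorem natDegree_comp_C_mul_X_add_C_le {R : Type*} [Semiring R] (p : R[X]) (a b : R) :
    (p.comp (C a * X + C b)).natDegree ≤ p.natDegree :=
  natDegree_comp_le.trans <| (Nat.mul_le_mul_left _ natDegree_linear_le).trans_eq (mul_one _)

theorem exists_natDegree_le_eval_eq_sum_eval_affine {R ι : Type*} [CommSemiring R] [Fintype ι]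
    (P : R[X]) (a b c : ι → R) (c₀ : R) :
    ∃ Q : R[X], Q.natDegree ≤ P.natDegree ∧
      ∀ x, c₀ + ∑ j, c j * P.eval (a j * x + b j) = Q.eval x := by
  refine ⟨C c₀ + ∑ j, C (c j) * P.comp (C (a j) * X + C (b j)), ?_,
    fun x => by simp [eval_finsetSum]⟩
  refine (natDegree_add_le _ _).trans (max_le (by simp) ?_)
  refine natDegree_sum_le_of_forall_le _ _ fun j _ => ?_
  exact natDegree_C_mul_le _ _ |>.trans (natDegree_comp_C_mul_X_add_C_le _ _ _)

theorem exists_natDegree_le_eqOn_of_forall_approx {s : Set ℝ} (hs : IsCompact s) {f : ℝ → ℝ}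
    (hf : ContinuousOn f s) {d : ℕ}
    (h : ∀ ε > 0, ∃ Q : ℝ[X], Q.natDegree ≤ d ∧ ∀ x ∈ s, |Q.eval x - f x| < ε) :
    ∃ Q : ℝ[X], Q.natDegree ≤ d ∧ Set.EqOn (Q.eval ·) f s := by
  have : CompactSpace s := isCompact_iff_compactSpace.mp hs
  let F : C(s, ℝ) := ⟨s.domRestrict f, hf.domRestrict⟩
  let S : Submodule ℝ C(s, ℝ) :=
    (degreeLT ℝ (d + 1)).map (toContinuousMapOnAlgHom s).toLinearMap
  have : FiniteDimensional ℝ (degreeLT ℝ (d + 1)) :=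
    (degreeLTEquiv ℝ (d + 1)).symm.finiteDimensional
  have : FiniteDimensional ℝ S := Module.Finite.map _ _
  have hF : F ∈ S := by
    rw [← SetLike.mem_coe, ← S.closed_of_finiteDimensional.closure_eq, Metric.mem_closure_iff]
    intro ε hε
    obtain ⟨Q, hQd, hQ⟩ := h (ε / 2) (half_pos hε)
    refine ⟨Q.toContinuousMapOn s, ⟨Q, ?_, rfl⟩, ?_⟩
    · rw [SetLike.mem_coe, degreeLT_succ_eq_degreeLE, mem_degreeLE]
      exact (degree_le_natDegree.trans (WithBot.coe_le_coe.mpr hQd))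
    · refine (ContinuousMap.dist_le (half_pos hε).le |>.mpr fun x => ?_).trans_lt
        (half_lt_self hε)
      rw [Real.dist_eq, abs_sub_comm]
      exact (hQ x x.2).le
  obtain ⟨Q, hQd, hQF⟩ := hF
  refine ⟨Q, ?_, fun x hx => congr($hQF ⟨x, hx⟩)⟩
  rw [SetLike.mem_coe, degreeLT_succ_eq_degreeLE, mem_degreeLE] at hQd
  exact natDegree_le_iff_degree_le.mpr hQd

theorem not_eqOn_abs_Icc {a b : ℝ} (ha : a < 0) (hb : 0 < b) (Q : ℝ[X]) :
    ¬ Set.EqOn (Q.eval ·) abs (Set.Icc a b) := by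
  intro hQ
  have hpos : Q = X := eq_of_infinite_eval_eq _ _ <| (Set.Icc_infinite hb).mono fun x hx => by
    simp [hQ ⟨ha.le.trans hx.1, hx.2⟩, abs_of_nonneg hx.1]
  have hneg : Q = -X := eq_of_infinite_eval_eq _ _ <| (Set.Icc_infinite ha).mono fun x hx => by
    simp [hQ ⟨hx.1, hx.2.trans hb.le⟩, abs_of_nonpos hx.2]
  have := congr(eval 1 $(hpos.symm.trans hneg))
  norm_num at this

end Polynomial

/-- With a polynomial activation of degree ≤ d, every single-hidden-layer
network is a polynomial of degree ≤ d; consequently such networks cannot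
uniformly approximate |x| on [−1,1] to arbitrary accuracy. -/
theorem stmt_15 (d : ℕ) (P : Polynomial ℝ) (hP : P.natDegree ≤ d)
    (σ : ℝ → ℝ) (hσ : ∀ t, σ t = P.eval t) :
    (∀ (m : ℕ) (a b c : Fin m → ℝ) (c₀ : ℝ),
      ∃ Q : Polynomial ℝ, Q.natDegree ≤ d ∧
        ∀ x : ℝ, c₀ + ∑ j, c j * σ (a j * x + b j) = Q.eval x) ∧
    ¬ (∀ ε > (0 : ℝ), ∃ (m : ℕ) (a b c : Fin m → ℝ) (c₀ : ℝ),
        ∀ x ∈ Set.Icc (-1 : ℝ) 1,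
          abs ((c₀ + ∑ j, c j * σ (a j * x + b j)) - abs x) < ε) := by
  have hnet : ∀ (m : ℕ) (a b c : Fin m → ℝ) (c₀ : ℝ),
      ∃ Q : ℝ[X], Q.natDegree ≤ d ∧ ∀ x : ℝ, c₀ + ∑ j, c j * σ (a j * x + b j) = Q.eval x := by
    intro m a b c c₀
    obtain ⟨Q, hQd, hQ⟩ := exists_natDegree_le_eval_eq_sum_eval_affine P a b c c₀
    exact ⟨Q, hQd.trans hP, by simpa only [hσ] using hQ⟩
  refine ⟨hnet, fun happrox => ?_⟩
  obtain ⟨Q, -, hQ⟩ := exists_natDegree_le_eqOn_of_forall_approx (d := d) isCompact_Icc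
    continuous_abs.continuousOn fun ε hε => by
      obtain ⟨m, a, b, c, c₀, hε⟩ := happrox ε hε
      obtain ⟨Q, hQd, hQ⟩ := hnet m a b c c₀
      exact ⟨Q, hQd, fun x hx => hQ x ▸ hε x hx⟩
  exact not_eqOn_abs_Icc (by norm_num) (by norm_num) Q hQ
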